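/- arXiv:1706.06394 — 3 statements merged into one kernel-verified Lean document; each statement's English description precedes it below -/
import Mathlib

section
/- Let γ₁,…,γ_M, λ₁,…,λ_N be real numbers such that the ℚ-linear span of {γ₁,…,γ_M} intersects the ℚ-linear span of {λ₁,…,λ_N} only in {0}. Then, under the identification 𝕋^{M+N} = 𝕋^M × 𝕋^N, one has A(γ₁,…,γ_M,λ₁,…,λ_N) = A(γ₁,…,γ_M) × A(λ₁,…,λ_N), and the normalized Haar measure on A(γ,λ) is the product of the normalized Haar measures on A(γ) and on A(λ). -/
open MeasureTheory

noncomputable section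

/-- The one-parameter group homomorphism `y ↦ (y γ₁, …, y γ_N)` from `ℝ` to the torus
`𝕋^N = (ℝ/ℤ)^N`. -/
def orbitHom {N : ℕ} (γ : Fin N → ℝ) : ℝ →+ (Fin N → AddCircle (1 : ℝ)) where
  toFun y := fun i => ((y * γ i : ℝ) : AddCircle (1 : ℝ))
  map_zero' := by funext i; simp
  map_add' x y := by funext i; simp [add_mul]

/-- `A(γ)`: the topological closure in `𝕋^N` of the one-parameter subgroup
`{(yγ₁,…,yγ_N) mod ℤ^N : y ∈ ℝ}`. -/
def torusSubgroup {N : ℕ} (γ : Fin N → ℝ) : AddSubgroup (Fin N → AddCircle (1 : ℝ)) :=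
  (orbitHom γ).range.topologicalClosure

/-- `A(γ,λ)` seen inside `𝕋^{M+N} = 𝕋^M × 𝕋^N`: the topological closure of the
one-parameter subgroup `{(yγ₁,…,yγ_M,yλ₁,…,yλ_N) : y ∈ ℝ}`. -/
def torusSubgroupProd {M N : ℕ} (γ : Fin M → ℝ) (lam : Fin N → ℝ) :
    AddSubgroup ((Fin M → AddCircle (1 : ℝ)) × (Fin N → AddCircle (1 : ℝ))) :=
  ((orbitHom γ).prod (orbitHom lam)).range.topologicalClosure

/-- `ω` is the normalized Haar measure of the (compact) subgroup `A`:
a probability measure supported on `A` and invariant under translation by elements of `A`. -/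
def IsHaarOn {G : Type*} [AddCommGroup G] [TopologicalSpace G] [MeasurableSpace G]
    (A : AddSubgroup G) (ω : Measure G) : Prop :=
  IsProbabilityMeasure ω ∧ ω ((A : Set G)ᶜ) = 0 ∧ ∀ a ∈ A, ω.map (· + a) = ω


/-!
The inclusion `A(γ,λ) ≤ A(γ) × A(λ)` is immediate. For the converse, a closed subgroup `H` of a
compact abelian group contains every point `x` killed by all characters that kill `H`: the
normalized Haar measure `μ` of `H` and its translate by `x` then have the same integral against
every character, hence coincide because the characters span a dense star-subalgebra, and
`μ(H - x) = μ(H) = 1` forces `x ∈ H`. A character `(m, n)` of `𝕋^M × 𝕋^N` that vanishes on the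
orbit of `(γ, λ)` satisfies `∑ mᵢγᵢ + ∑ nⱼλⱼ = 0`; since the two sums lie in the disjoint
`ℚ`-spans, both vanish, so `(m, n)` also kills `A(γ) × A(λ)`.

For the measures, the product of normalized Haar measures on `A(γ)` and `A(λ)` is one on
`A(γ) × A(λ)`, and a normalized Haar measure `ω` on a subgroup `A` is unique because `ν ∗ ω = ω`
for every probability measure `ν` carried by `A`.
-/

section Haar

variable {G : Type*} [AddCommGroup G] [TopologicalSpace G] [MeasurableSpace G]

lemma IsHaarOn.conv_eq [MeasurableAdd₂ G] {A : AddSubgroup G}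
    {ω : Measure G} (hω : IsHaarOn A ω) {ν : Measure G} [IsProbabilityMeasure ν]
    (hν : ν ((A : Set G)ᶜ) = 0) : ν ∗ ω = ω := by
  have := hω.1
  ext E hE
  rw [Measure.conv, Measure.map_apply measurable_add hE, Measure.prod_apply (measurable_add hE)]
  have htrans : ∀ᵐ x ∂ν, ω (Prod.mk x ⁻¹' ((fun p : G × G ↦ p.1 + p.2) ⁻¹' E)) = ω E := by
    filter_upwards [measure_eq_zero_iff_ae_notMem.mp hν] with x hx
    calc ω (Prod.mk x ⁻¹' ((fun p : G × G ↦ p.1 + p.2) ⁻¹' E)) = ω ((· + x) ⁻¹' E) := by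
          simp only [Set.preimage, Set.mem_ofPred_eq, add_comm x]
      _ = ω.map (· + x) E := (Measure.map_apply (measurable_add_const x) hE).symm
      _ = ω E := by rw [hω.2.2 x (by simpa using hx)]
  rw [lintegral_congr_ae htrans, lintegral_const, measure_univ, mul_one]

lemma IsHaarOn.unique [MeasurableAdd₂ G] {A : AddSubgroup G}
    {ω ω' : Measure G} (hω : IsHaarOn A ω) (hω' : IsHaarOn A ω') : ω = ω' := by
  have := hω.1
  have := hω'.1
  rw [← hω.conv_eq hω'.2.1, Measure.conv_comm, hω'.conv_eq hω.2.1]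

lemma IsHaarOn.prod {G' : Type*} [AddCommGroup G'] [TopologicalSpace G'] [MeasurableSpace G']
    [MeasurableAdd G] [MeasurableAdd G'] {A : AddSubgroup G}
    {B : AddSubgroup G'} {μ : Measure G} {ν : Measure G'} (hμ : IsHaarOn A μ)
    (hν : IsHaarOn B ν) : IsHaarOn (A.prod B) (μ.prod ν) := by
  have := hμ.1
  have := hν.1
  refine ⟨inferInstance, ?_, ?_⟩
  · have hcompl : ((A.prod B : AddSubgroup (G × G')) : Set (G × G'))ᶜ ⊆
        (A : Set G)ᶜ ×ˢ Set.univ ∪ Set.univ ×ˢ (B : Set G')ᶜ := by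
      rintro ⟨a, b⟩ hab
      by_cases ha : a ∈ A
      · exact Or.inr ⟨trivial, fun hb ↦ hab ⟨ha, hb⟩⟩
      · exact Or.inl ⟨ha, trivial⟩
    refine measure_mono_null hcompl (measure_union_null ?_ ?_)
    · rw [Measure.prod_prod, hμ.2.1, zero_mul]
    · rw [Measure.prod_prod, hν.2.1, mul_zero]
  · rintro ⟨a, b⟩ ⟨ha, hb⟩
    change (μ.prod ν).map (Prod.map (· + a) (· + b)) = _
    rw [← Measure.map_prod_map _ _ (measurable_add_const a) (measurable_add_const b),
      hμ.2.2 a ha, hν.2.2 b hb]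

lemma exists_isHaarOn [IsTopologicalAddGroup G] [CompactSpace G] [T2Space G]
    [BorelSpace G] {H : AddSubgroup G} (hH : IsClosed (H : Set G)) : ∃ μ, IsHaarOn H μ := by
  have : CompactSpace H := isCompact_iff_compactSpace.mp hH.isCompact
  let μ₀ := Measure.addHaarMeasure (⊤ : TopologicalSpace.PositiveCompacts H)
  have hμ₀ : μ₀ Set.univ = 1 := Measure.addHaarMeasure_self
  refine ⟨μ₀.map Subtype.val, ⟨?_⟩, ?_, fun a ha ↦ ?_⟩
  · rw [Measure.map_apply measurable_subtype_coe MeasurableSet.univ, Set.preimage_univ, hμ₀]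
  · rw [Measure.map_apply measurable_subtype_coe hH.measurableSet.compl, Set.preimage_compl,
      Subtype.coe_preimage_self, Set.compl_univ, measure_empty]
  · rw [Measure.map_map (measurable_add_const a) measurable_subtype_coe]
    change μ₀.map (Subtype.val ∘ (· + (⟨a, ha⟩ : H))) = _
    rw [← Measure.map_map measurable_subtype_coe (measurable_add_const _),
      map_add_right_eq_self]

lemma IsHaarOn.mem_of_map_add_eq_self [MeasurableAdd G] {H : AddSubgroup G}
    (hH : MeasurableSet (H : Set G)) {μ : Measure G} (hμ : IsHaarOn H μ) {x : G} (hx : μ.map (· + x) = μ) : x ∈ H := by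
  have := hμ.1
  by_contra hxH
  have hdisj : (· + x) ⁻¹' (H : Set G) ⊆ (H : Set G)ᶜ := fun t ht htH ↦
    hxH (by simpa using H.sub_mem ht htH)
  have hshift : μ.map (· + x) H = 0 := by
    rw [Measure.map_apply (measurable_add_const x) hH]
    exact measure_mono_null hdisj hμ.2.1
  rw [hx, (prob_compl_eq_zero_iff hH).1 hμ.2.1] at hshift
  exact one_ne_zero hshift

end Haar

section Characters

open BoundedContinuousFunction

variable {G : Type*} [AddCommGroup G] [TopologicalSpace G] [CompactSpace G]

lemma AddCircle.injective_coe_toCircle :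
    Function.Injective fun a : AddCircle (1 : ℝ) ↦ (a.toCircle : ℂ) :=
  Circle.coe_injective.comp (AddCircle.injective_toCircle one_ne_zero)

namespace ContinuousAddMonoidHom

def toCircleBCF (χ : G →ₜ+ AddCircle (1 : ℝ)) : G →ᵇ ℂ :=
  mkOfCompact ⟨fun g ↦ (χ g).toCircle, by fun_prop⟩

@[simp]
lemma toCircleBCF_apply (χ : G →ₜ+ AddCircle (1 : ℝ)) (g : G) :
    toCircleBCF χ g = (χ g).toCircle := rfl

lemma toCircleBCF_zero : toCircleBCF (0 : G →ₜ+ AddCircle (1 : ℝ)) = 1 := by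
  ext g; simp

lemma toCircleBCF_add (χ ψ : G →ₜ+ AddCircle (1 : ℝ)) :
    toCircleBCF (χ + ψ) = toCircleBCF χ * toCircleBCF ψ := by
  ext g; simp [AddCircle.toCircle_add]

lemma star_toCircleBCF (χ : G →ₜ+ AddCircle (1 : ℝ)) :
    star (toCircleBCF χ) = toCircleBCF (-χ) := by
  ext g
  simp [show (-χ) g = -χ g from rfl, AddCircle.toCircle_neg, ← Circle.coe_inv_eq_conj]

end ContinuousAddMonoidHom

open ContinuousAddMonoidHom

variable {Λ : Type*} [AddGroup Λ]

def charSubmonoid (Φ : Λ →+ (G →ₜ+ AddCircle (1 : ℝ))) : Submonoid (G →ᵇ ℂ) where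
  carrier := Set.range fun k ↦ toCircleBCF (Φ k)
  mul_mem' := by
    rintro _ _ ⟨k, rfl⟩ ⟨l, rfl⟩
    exact ⟨k + l, by simp only [map_add, toCircleBCF_add]⟩
  one_mem' := ⟨0, by simp only [map_zero, toCircleBCF_zero]⟩

lemma star_mem_charSubmonoid {Φ : Λ →+ (G →ₜ+ AddCircle (1 : ℝ))} {f : G →ᵇ ℂ}
    (hf : f ∈ charSubmonoid Φ) : star f ∈ charSubmonoid Φ := by
  obtain ⟨k, rfl⟩ := hf
  exact ⟨-k, by simp only [map_neg, star_toCircleBCF]⟩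

lemma mem_span_of_mem_adjoin_charSubmonoid {Φ : Λ →+ (G →ₜ+ AddCircle (1 : ℝ))} {f : G →ᵇ ℂ}
    (hf : f ∈ StarAlgebra.adjoin ℂ (charSubmonoid Φ : Set (G →ᵇ ℂ))) :
    f ∈ Submodule.span ℂ (charSubmonoid Φ : Set (G →ᵇ ℂ)) := by
  have hclosure : Submonoid.closure ((charSubmonoid Φ : Set (G →ᵇ ℂ)) ∪ star (charSubmonoid Φ))
      ≤ charSubmonoid Φ :=
    Submonoid.closure_le.2 (Set.union_subset le_rfl fun f hf ↦ by
      simpa using star_mem_charSubmonoid hf)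
  have hf' : f ∈ Subalgebra.toSubmodule (StarAlgebra.adjoin ℂ _).toSubalgebra := hf
  rw [StarAlgebra.adjoin_eq_span] at hf'
  exact Submodule.span_mono hclosure hf'

variable [MeasurableSpace G]

lemma integral_toCircleBCF_map_add [BorelSpace G] [IsTopologicalAddGroup G] (μ : Measure G)
    (χ : G →ₜ+ AddCircle (1 : ℝ)) (a : G) :
    ∫ t, toCircleBCF χ t ∂(μ.map (· + a)) = toCircleBCF χ a * ∫ t, toCircleBCF χ t ∂μ := by
  rw [integral_map (measurable_add_const a).aemeasurable
    (toCircleBCF χ).continuous.aestronglyMeasurable, ← integral_const_mul]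
  simp [AddCircle.toCircle_add, mul_comm]

lemma IsHaarOn.integral_toCircleBCF_eq_zero [BorelSpace G] [IsTopologicalAddGroup G]
    {H : AddSubgroup G} {μ : Measure G} (hμ : IsHaarOn H μ) {χ : G →ₜ+ AddCircle (1 : ℝ)}
    {h : G} (hh : h ∈ H) (hχ : χ h ≠ 0) : ∫ t, toCircleBCF χ t ∂μ = 0 := by
  have hne : toCircleBCF χ h ≠ 1 := fun h1 ↦
    hχ (AddCircle.injective_coe_toCircle (by simpa using h1))
  have hinv := integral_toCircleBCF_map_add μ χ h
  rw [hμ.2.2 h hh] at hinv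
  have hfactor : (toCircleBCF χ h - 1) * ∫ t, toCircleBCF χ t ∂μ = 0 := by
    linear_combination -hinv
  exact (mul_eq_zero.1 hfactor).resolve_left (sub_ne_zero.2 hne)

end Characters

section Annihilator

open BoundedContinuousFunction ContinuousAddMonoidHom

variable {G : Type*} [AddCommGroup G] [TopologicalSpace G] [IsTopologicalAddGroup G]
  [CompactSpace G] [MeasurableSpace G] [BorelSpace G] {H : AddSubgroup G} {μ : Measure G}

lemma IsHaarOn.integral_toCircleBCF_map_add_eq (hμ : IsHaarOn H μ) {χ : G →ₜ+ AddCircle (1 : ℝ)}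
    {x : G} (hx : (∀ h ∈ H, χ h = 0) → χ x = 0) :
    ∫ t, toCircleBCF χ t ∂(μ.map (· + x)) = ∫ t, toCircleBCF χ t ∂μ := by
  rw [integral_toCircleBCF_map_add]
  by_cases hker : ∀ h ∈ H, χ h = 0
  · simp [hx hker]
  · push Not at hker
    obtain ⟨h, hh, hne⟩ := hker
    rw [hμ.integral_toCircleBCF_eq_zero hh hne, mul_zero]

variable [PolishSpace G] {Λ : Type*} [AddGroup Λ]

lemma IsHaarOn.map_add_eq_self_of_forall_char (Φ : Λ →+ (G →ₜ+ AddCircle (1 : ℝ)))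
    (hΦ : (Set.range fun k ↦ ⇑(Φ k)).SeparatesPoints) (hμ : IsHaarOn H μ) {x : G}
    (hx : ∀ k, (∀ h ∈ H, Φ k h = 0) → Φ k x = 0) : μ.map (· + x) = μ := by
  have := hμ.1
  refine ext_of_forall_mem_subalgebra_integral_eq_of_polish
    (A := StarAlgebra.adjoin ℂ (charSubmonoid Φ : Set (G →ᵇ ℂ))) ?_ fun f hf ↦ ?_
  · intro y z hyz
    obtain ⟨_, ⟨k, rfl⟩, hk⟩ := hΦ hyz
    refine ⟨_, Set.mem_image_of_mem _ (StarSubalgebra.mem_map.2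
      ⟨_, StarAlgebra.subset_adjoin ℂ _ ⟨k, rfl⟩, rfl⟩), fun h ↦ ?_⟩
    exact hk (AddCircle.injective_coe_toCircle h)
  have hspan := mem_span_of_mem_adjoin_charSubmonoid hf
  clear hf
  induction hspan using Submodule.span_induction with
  | mem _ hf =>
    obtain ⟨k, rfl⟩ := hf
    exact hμ.integral_toCircleBCF_map_add_eq (hx k)
  | zero => simp
  | add f g _ _ hf hg =>
    simp only [coe_add, Pi.add_apply]
    rw [integral_add (f.integrable _) (g.integrable _), integral_add (f.integrable _)
      (g.integrable _), hf, hg]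
  | smul c f _ hf => simp only [coe_smul, integral_smul, hf]

theorem AddSubgroup.mem_of_forall_char_eq_zero (Φ : Λ →+ (G →ₜ+ AddCircle (1 : ℝ)))
    (hΦ : (Set.range fun k ↦ ⇑(Φ k)).SeparatesPoints) (hH : IsClosed (H : Set G)) {x : G}
    (hx : ∀ k, (∀ h ∈ H, Φ k h = 0) → Φ k x = 0) : x ∈ H :=
  let ⟨_, hμ⟩ := exists_isHaarOn hH
  hμ.mem_of_map_add_eq_self hH.measurableSet (hμ.map_add_eq_self_of_forall_char Φ hΦ hx)

end Annihilator

section Torus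

variable {ι : Type*} [Fintype ι]

def torusChar : (ι → ℤ) →+ ((ι → AddCircle (1 : ℝ)) →ₜ+ AddCircle (1 : ℝ)) where
  toFun m :=
    { toFun := fun u ↦ ∑ i, m i • u i
      map_zero' := by simp
      map_add' := by simp [smul_add, Finset.sum_add_distrib]
      continuous_toFun := by fun_prop }
  map_zero' := by ext u; change ∑ i, _ = _; simp
  map_add' m m' := by
    ext u
    change ∑ i, (m + m') i • u i = ∑ i, m i • u i + ∑ i, m' i • u i
    simp [add_smul, Finset.sum_add_distrib]

@[simp]
lemma torusChar_apply (m : ι → ℤ) (u : ι → AddCircle (1 : ℝ)) :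
    torusChar m u = ∑ i, m i • u i := rfl

lemma separatesPoints_torusChar :
    (Set.range fun m : ι → ℤ ↦ ⇑(torusChar m)).SeparatesPoints := by
  classical
  intro u v huv
  obtain ⟨i, hi⟩ := Function.ne_iff.1 huv
  exact ⟨_, ⟨Pi.single i 1, rfl⟩, by simpa [Pi.single_apply] using hi⟩

lemma torusChar_orbitHom {N : ℕ} (m : Fin N → ℤ) (γ : Fin N → ℝ) (y : ℝ) :
    torusChar m (orbitHom γ y) = ((y * ∑ i, m i • γ i : ℝ) : AddCircle (1 : ℝ)) := by
  simp [orbitHom, Finset.mul_sum, ← AddCircle.coe_zsmul, mul_left_comm]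

lemma torusChar_eq_zero_of_mem_torusSubgroup {N : ℕ} {m : Fin N → ℤ} {γ : Fin N → ℝ}
    (hm : ∑ i, m i • γ i = 0) {u : Fin N → AddCircle (1 : ℝ)} (hu : u ∈ torusSubgroup γ) :
    torusChar m u = 0 := by
  refine AddSubgroup.topologicalClosure_minimal _ (t := (torusChar m).toAddMonoidHom.ker) ?_
    (isClosed_eq (torusChar m).continuous continuous_const) hu
  rintro _ ⟨y, rfl⟩
  exact (torusChar_orbitHom m γ y).trans (by rw [hm, mul_zero]; rfl)

end Torus

section CharProd

variable {G₁ G₂ E Λ₁ Λ₂ : Type*} [AddCommGroup G₁] [TopologicalSpace G₁] [AddCommGroup G₂]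
  [TopologicalSpace G₂] [AddCommGroup E] [TopologicalSpace E] [IsTopologicalAddGroup E]
  [AddCommGroup Λ₁] [AddCommGroup Λ₂]

def charProd (Φ₁ : Λ₁ →+ (G₁ →ₜ+ E)) (Φ₂ : Λ₂ →+ (G₂ →ₜ+ E)) :
    Λ₁ × Λ₂ →+ (G₁ × G₂ →ₜ+ E) where
  toFun k := (Φ₁ k.1).coprod (Φ₂ k.2)
  map_zero' := by ext; simp
  map_add' k l := by ext; simp; abel

@[simp]
lemma charProd_apply (Φ₁ : Λ₁ →+ (G₁ →ₜ+ E)) (Φ₂ : Λ₂ →+ (G₂ →ₜ+ E)) (k : Λ₁ × Λ₂)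
    (x : G₁ × G₂) : charProd Φ₁ Φ₂ k x = Φ₁ k.1 x.1 + Φ₂ k.2 x.2 := rfl

lemma separatesPoints_charProd {Φ₁ : Λ₁ →+ (G₁ →ₜ+ E)} {Φ₂ : Λ₂ →+ (G₂ →ₜ+ E)}
    (hΦ₁ : (Set.range fun k ↦ ⇑(Φ₁ k)).SeparatesPoints)
    (hΦ₂ : (Set.range fun k ↦ ⇑(Φ₂ k)).SeparatesPoints) :
    (Set.range fun k ↦ ⇑(charProd Φ₁ Φ₂ k)).SeparatesPoints := by
  rintro ⟨x₁, x₂⟩ ⟨y₁, y₂⟩ hxy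
  by_cases h₁ : x₁ = y₁
  · obtain ⟨_, ⟨k, rfl⟩, hk⟩ := hΦ₂ fun h₂ ↦ hxy (Prod.ext h₁ h₂)
    exact ⟨_, ⟨(0, k), rfl⟩, by simpa [h₁] using hk⟩
  · obtain ⟨_, ⟨k, rfl⟩, hk⟩ := hΦ₁ h₁
    exact ⟨_, ⟨(k, 0), rfl⟩, by simpa using hk⟩

end CharProd

lemma eq_zero_of_forall_coe_mul_eq_zero {c : ℝ}
    (h : ∀ y : ℝ, ((y * c : ℝ) : AddCircle (1 : ℝ)) = 0) : c = 0 := by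
  by_contra hc
  have hhalf := h (2⁻¹ / c)
  rw [div_mul_cancel₀ _ hc, AddCircle.coe_eq_zero_iff_of_mem_Ico ⟨by norm_num, by norm_num⟩]
    at hhalf
  norm_num at hhalf

lemma sum_zsmul_mem_span {ι : Type*} [Fintype ι] (m : ι → ℤ) (γ : ι → ℝ) :
    ∑ i, m i • γ i ∈ Submodule.span ℚ (Set.range γ) :=
  Submodule.sum_mem _ fun i _ ↦ zsmul_mem (Submodule.subset_span (Set.mem_range_self i)) _

lemma torusSubgroupProd_le_prod {M N : ℕ} (γ : Fin M → ℝ) (lam : Fin N → ℝ) :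
    torusSubgroupProd γ lam ≤ (torusSubgroup γ).prod (torusSubgroup lam) := by
  refine AddSubgroup.topologicalClosure_minimal _ ?_
    ((AddSubgroup.isClosed_topologicalClosure _).prod (AddSubgroup.isClosed_topologicalClosure _))
  rintro _ ⟨y, rfl⟩
  exact ⟨AddSubgroup.le_topologicalClosure (orbitHom γ).range ⟨y, rfl⟩,
    AddSubgroup.le_topologicalClosure (orbitHom lam).range ⟨y, rfl⟩⟩

lemma prod_le_torusSubgroupProd {M N : ℕ} {γ : Fin M → ℝ} {lam : Fin N → ℝ}
    (hdisj : Disjoint (Submodule.span ℚ (Set.range γ)) (Submodule.span ℚ (Set.range lam))) :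
    (torusSubgroup γ).prod (torusSubgroup lam) ≤ torusSubgroupProd γ lam := by
  rintro ⟨u, v⟩ ⟨hu, hv⟩
  refine AddSubgroup.mem_of_forall_char_eq_zero (charProd torusChar torusChar)
    (separatesPoints_charProd separatesPoints_torusChar separatesPoints_torusChar)
    (AddSubgroup.isClosed_topologicalClosure _) fun ⟨m, n⟩ hker ↦ ?_
  have hsum : ∑ i, m i • γ i + ∑ j, n j • lam j = 0 :=
    eq_zero_of_forall_coe_mul_eq_zero fun y ↦ by
      have h := hker _ (AddSubgroup.le_topologicalClosure _ ⟨y, rfl⟩)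
      rwa [charProd_apply, AddMonoidHom.prod_apply, torusChar_orbitHom, torusChar_orbitHom,
        ← AddCircle.coe_add, ← mul_add] at h
  obtain ⟨hm, hn⟩ := Submodule.disjoint_iff_add_eq_zero.1 hdisj (sum_zsmul_mem_span m γ)
    (sum_zsmul_mem_span n lam) hsum
  simp [torusChar_eq_zero_of_mem_torusSubgroup hm hu,
    torusChar_eq_zero_of_mem_torusSubgroup hn hv]

/-- If the `ℚ`-spans of `{γ₁,…,γ_M}` and `{λ₁,…,λ_N}` meet only in `0`, then
`A(γ,λ) = A(γ) × A(λ)` under the identification `𝕋^{M+N} = 𝕋^M × 𝕋^N`, and the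
normalized Haar measure on `A(γ,λ)` is the product of those on `A(γ)` and `A(λ)`. -/
theorem stmt3 (M N : ℕ) (γ : Fin M → ℝ) (lam : Fin N → ℝ)
    (hdisj : Disjoint (Submodule.span ℚ (Set.range γ)) (Submodule.span ℚ (Set.range lam))) :
    torusSubgroupProd γ lam = (torusSubgroup γ).prod (torusSubgroup lam) ∧
    ∀ (ω : Measure ((Fin M → AddCircle (1 : ℝ)) × (Fin N → AddCircle (1 : ℝ))))
      (ω₁ : Measure (Fin M → AddCircle (1 : ℝ))) (ω₂ : Measure (Fin N → AddCircle (1 : ℝ))),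
      IsHaarOn (torusSubgroupProd γ lam) ω → IsHaarOn (torusSubgroup γ) ω₁ →
      IsHaarOn (torusSubgroup lam) ω₂ → ω = ω₁.prod ω₂ := by
  have hA := (torusSubgroupProd_le_prod γ lam).antisymm (prod_le_torusSubgroupProd hdisj)
  refine ⟨hA, fun ω ω₁ ω₂ hω hω₁ hω₂ ↦ ?_⟩
  -- instance search does not find this one on the product type
  have : MeasurableAdd₂ ((Fin M → AddCircle (1 : ℝ)) × (Fin N → AddCircle (1 : ℝ))) :=
    ContinuousAdd.measurableMul₂
  exact (hA ▸ hω).unique (hω₁.prod hω₂)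

end
end

section
/- Let N ≥ 1 and γ₁,…,γ_N ∈ ℝ. The following are equivalent: (i) for every (k₁,…,k_N) ∈ ℤ^N with k₁γ₁ + … + k_Nγ_N = 0, the sum k₁ + … + k_N is even; (ii) the point (1/2,…,1/2) mod ℤ^N belongs to A(γ₁,…,γ_N). -/
/-!
(ii) ⇒ (i): for an integer relation `k`, the character `z ↦ ∑ kᵢ zᵢ` of `𝕋^N` is continuous
and kills the orbit `y ↦ yγ`, hence kills `A(γ)`; at `(1/2, …, 1/2)` it equals `(∑ kᵢ)/2 mod 1`.

(i) ⇒ (ii): the preimage `C` of `A(γ)` in `ℝ^N` is a closed subgroup containing `ℤ^N` and `ℝγ`.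
A closed subgroup of a finite-dimensional real space is `V ⊕ Λ`, with `V` the largest subspace
it contains and `Λ` a lattice in a complement (a closed subgroup without lines is discrete:
normalised small elements accumulate at a unit vector all of whose real multiples lie in the
subgroup). Hence a point outside `C` is separated from `C` by a linear form `f` that is
integer-valued on `C`. Such an `f` is `x ↦ ∑ kᵢ xᵢ` with `kᵢ = f(eᵢ) ∈ ℤ`, it vanishes at `γ`
because it is integer-valued on `ℝγ`, and its value at `(1/2, …, 1/2)` is `(∑ kᵢ)/2`.
-/

noncomputable section

open Filter Topology Set

lemma tendsto_floor_div_mul {ι : Type*} {l : Filter ι} {r : ι → ℝ} (hr_pos : ∀ i, 0 < r i)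
    (hr : Tendsto r l (𝓝 0)) (t : ℝ) : Tendsto (fun i => (⌊t / r i⌋ : ℝ) * r i) l (𝓝 t) := by
  have hdist : ∀ i, dist ((⌊t / r i⌋ : ℝ) * r i) t ≤ r i := by
    intro i
    have hfract : (⌊t / r i⌋ : ℝ) * r i - t = -(Int.fract (t / r i) * r i) := by
      rw [Int.fract, sub_mul, div_mul_cancel₀ t (hr_pos i).ne']
      ring
    rw [Real.dist_eq, hfract, abs_neg,
      abs_of_nonneg (mul_nonneg (Int.fract_nonneg _) (hr_pos i).le)]
    exact mul_le_of_le_one_left (hr_pos i).le (Int.fract_lt_one _).le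
  exact tendsto_iff_dist_tendsto_zero.2 (squeeze_zero (fun _ => dist_nonneg) hdist hr)

lemma eq_zero_of_forall_mul_mem_range_intCast {a : ℝ}
    (h : ∀ t : ℝ, t * a ∈ range ((↑) : ℤ → ℝ)) : a = 0 := by
  by_contra ha
  obtain ⟨n, hn⟩ := h (2 * a)⁻¹
  rw [inv_mul_eq_div, div_mul_cancel_right₀ ha] at hn
  have : 2 * n = 1 := by
    exact_mod_cast (show (2 * n : ℝ) = 1 by rw [hn]; norm_num)
  omega

theorem IsZLattice.exists_linearMap_intValued_of_notMem {E : Type*} [NormedAddCommGroup E]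
    [NormedSpace ℝ E] [FiniteDimensional ℝ E] (L : Submodule ℤ E) [DiscreteTopology L]
    [IsZLattice ℝ L] {q : E} (hq : q ∉ L) :
    ∃ f : E →ₗ[ℝ] ℝ, (∀ x ∈ L, f x ∈ range ((↑) : ℤ → ℝ)) ∧ f q ∉ range ((↑) : ℤ → ℝ) := by
  have := ZLattice.module_free ℝ L
  set b := (Module.Free.chooseBasis ℤ L).ofZLatticeBasis ℝ L
  have hspan : Submodule.span ℤ (range b) = L :=
    (Module.Free.chooseBasis ℤ L).ofZLatticeBasis_span ℝ L
  have hmem : ∀ x, x ∈ L ↔ ∀ i, b.repr x i ∈ range ((↑) : ℤ → ℝ) := fun x => by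
    simpa only [hspan, algebraMap_int_eq, Int.coe_castRingHom] using b.mem_span_iff_repr_mem ℤ x
  obtain ⟨i, hi⟩ := not_forall.1 ((hmem q).not.1 hq)
  exact ⟨b.coord i, fun x hx => (hmem x).1 hx i, hi⟩

namespace AddSubgroup

variable {E : Type*}

section Module

variable (R : Type*) [Semiring R] [AddCommGroup E] [Module R E] (C : AddSubgroup E)

/-- The largest `R`-submodule contained in `C`. -/
def linealitySpace : Submodule R E where
  carrier := {x | ∀ t : R, t • x ∈ C}
  add_mem' hx hy t := by
    rw [smul_add]
    exact add_mem (hx t) (hy t)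
  zero_mem' t := by
    rw [smul_zero]
    exact zero_mem C
  smul_mem' c x hx t := by
    rw [smul_smul]
    exact hx (t * c)

lemma linealitySpace_subset : (C.linealitySpace R : Set E) ⊆ C := fun x hx => by
  simpa using hx 1

end Module

variable [NormedAddCommGroup E] [NormedSpace ℝ E] {C : AddSubgroup E}

lemma smul_mem_of_tendsto_normalize (hC : IsClosed (C : Set E)) {d : ℕ → E}
    (hdC : ∀ n, d n ∈ C) (hd_ne : ∀ n, d n ≠ 0) (hd : Tendsto d atTop (𝓝 0)) {u : E}
    (hu : Tendsto (fun n => ‖d n‖⁻¹ • d n) atTop (𝓝 u)) (t : ℝ) : t • u ∈ C := by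
  have hnorm_pos : ∀ n, 0 < ‖d n‖ := fun n => norm_pos_iff.2 (hd_ne n)
  have hmul : Tendsto (fun n => (⌊t / ‖d n‖⌋ : ℝ) * ‖d n‖) atTop (𝓝 t) :=
    tendsto_floor_div_mul hnorm_pos (tendsto_norm_zero.comp hd) t
  have hlim : Tendsto (fun n => ⌊t / ‖d n‖⌋ • d n) atTop (𝓝 (t • u)) := by
    refine (hmul.smul hu).congr fun n => ?_
    rw [smul_smul, mul_assoc, mul_inv_cancel₀ (hnorm_pos n).ne', mul_one,
      Int.cast_smul_eq_zsmul]
  exact hC.mem_of_tendsto hlim (Eventually.of_forall fun n => zsmul_mem (hdC n) _)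

variable [FiniteDimensional ℝ E]

theorem discreteTopology_of_isClosed (hC : IsClosed (C : Set E))
    (hline : C.linealitySpace ℝ = ⊥) : DiscreteTopology C := by
  rw [discreteTopology_iff_isOpen_singleton_zero, Metric.isOpen_singleton_iff]
  by_contra! hsmall
  choose d hd_lt hd_ne using fun n : ℕ => hsmall (1 / (n + 1)) Nat.one_div_pos_of_nat
  have hd : Tendsto (fun n => (d n : E)) atTop (𝓝 0) :=
    tendsto_iff_dist_tendsto_zero.2 (squeeze_zero (fun _ => dist_nonneg)
      (fun n => (hd_lt n).le) tendsto_one_div_add_atTop_nhds_zero_nat)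
  have hd_ne' : ∀ n, (d n : E) ≠ 0 := fun n => by exact_mod_cast hd_ne n
  have hsphere : ∀ n, ‖(d n : E)‖⁻¹ • (d n : E) ∈ Metric.sphere (0 : E) 1 := fun n => by
    simp [norm_smul, hd_ne' n]
  obtain ⟨u, hu_sphere, φ, hφ, hu⟩ := (isCompact_sphere (0 : E) 1).tendsto_subseq hsphere
  have hu_mem : u ∈ C.linealitySpace ℝ := fun t =>
    smul_mem_of_tendsto_normalize hC (fun n => (d (φ n)).2) (fun n => hd_ne' (φ n))
      (hd.comp hφ.tendsto_atTop) hu t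
  rw [hline, Submodule.mem_bot] at hu_mem
  exact Metric.ne_of_mem_sphere hu_sphere one_ne_zero hu_mem

theorem exists_linearMap_intValued_of_notMem (hC : IsClosed (C : Set E))
    (hspan : Submodule.span ℝ (C : Set E) = ⊤) {p : E} (hp : p ∉ C) :
    ∃ f : E →ₗ[ℝ] ℝ, (∀ x ∈ C, f x ∈ range ((↑) : ℤ → ℝ)) ∧ f p ∉ range ((↑) : ℤ → ℝ) := by
  set V := C.linealitySpace ℝ
  obtain ⟨W, hVW⟩ := V.exists_isCompl
  set πW := W.projectionOnto V hVW.symm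
  have hπW_mem : ∀ x ∈ C, (πW x : E) ∈ C := fun x hx => by
    rw [Submodule.coe_projectionOnto_apply, Submodule.projection_eq_self_sub_projection hVW]
    exact sub_mem hx (C.linealitySpace_subset ℝ (Submodule.projection_apply_mem _ _))
  -- `C = V ⊕ (C ∩ W)`, and `C ∩ W` contains no line, so it is a lattice in `W`.
  set D : AddSubgroup W := C.comap W.subtype.toAddMonoidHom
  have hD_line : D.linealitySpace ℝ = ⊥ := by
    refine (Submodule.eq_bot_iff _).2 fun w hw => ?_
    have hwV : (w : E) ∈ V := fun t => hw t
    exact Subtype.ext (Submodule.disjoint_def.1 hVW.disjoint _ hwV w.2)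
  have : DiscreteTopology D.toIntSubmodule :=
    discreteTopology_of_isClosed (hC.preimage continuous_subtype_val) hD_line
  have : IsZLattice ℝ D.toIntSubmodule := by
    refine ⟨eq_top_iff.2 ?_⟩
    calc ⊤ = Submodule.map πW (Submodule.span ℝ (C : Set E)) := by
          rw [hspan, Submodule.map_top, Submodule.range_projectionOnto]
      _ = Submodule.span ℝ (πW '' C) := Submodule.map_span _ _
      _ ≤ Submodule.span ℝ (D.toIntSubmodule : Set W) :=
          Submodule.span_mono (image_subset_iff.2 fun x hx => hπW_mem x hx)
  have hq : πW p ∉ D.toIntSubmodule := fun hq => hp <| by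
    rw [← Submodule.projection_add_projection_eq_self hVW p]
    exact add_mem (C.linealitySpace_subset ℝ (Submodule.projection_apply_mem _ _)) hq
  obtain ⟨g, hgD, hgq⟩ := IsZLattice.exists_linearMap_intValued_of_notMem _ hq
  exact ⟨g ∘ₗ πW, fun x hx => hgD _ (hπW_mem x hx), hgq⟩

end AddSubgroup

variable {N : ℕ}

lemma torusSubgroup_le_ker {G : Type*} [AddGroup G] [TopologicalSpace G] [T2Space G]
    (γ : Fin N → ℝ) (χ : (Fin N → AddCircle (1 : ℝ)) →+ G) (hχ : Continuous χ)
    (horbit : ∀ y, χ (orbitHom γ y) = 0) : torusSubgroup γ ≤ χ.ker :=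
  AddSubgroup.topologicalClosure_minimal _ (by rintro _ ⟨y, rfl⟩; exact horbit y)
    (isClosed_eq hχ continuous_const)

lemma two_dvd_sum_of_half_mem_torusSubgroup {γ : Fin N → ℝ}
    (hhalf : (fun _ : Fin N => (((1 : ℝ) / 2 : ℝ) : AddCircle (1 : ℝ))) ∈ torusSubgroup γ)
    {k : Fin N → ℤ} (hk : ∑ i, (k i : ℝ) * γ i = 0) : 2 ∣ ∑ i, k i := by
  let χ : (Fin N → AddCircle (1 : ℝ)) →+ AddCircle (1 : ℝ) :=
    ∑ i, k i • Pi.evalAddMonoidHom _ i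
  have hχ : ∀ x : Fin N → ℝ,
      χ (fun i => (x i : AddCircle (1 : ℝ))) = ((∑ i, k i * x i : ℝ) : AddCircle (1 : ℝ)) := by
    intro x
    simp [χ]
  have hcont : Continuous χ := by
    have : ⇑χ = fun z => ∑ i, k i • z i := by ext z; simp [χ]
    rw [this]
    fun_prop
  have horbit : ∀ y, χ (orbitHom γ y) = 0 := fun y => (hχ fun i => y * γ i).trans <| by
    simp_rw [mul_left_comm _ y, ← Finset.mul_sum, hk, mul_zero, AddCircle.coe_zero]
  have hzero := torusSubgroup_le_ker γ χ hcont horbit hhalf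
  rw [AddMonoidHom.mem_ker, hχ, AddCircle.coe_eq_zero_iff] at hzero
  obtain ⟨m, hm⟩ := hzero
  refine ⟨m, ?_⟩
  rw [← Finset.sum_mul, zsmul_eq_mul, mul_one] at hm
  exact_mod_cast (show (∑ i, (k i : ℝ)) = 2 * m by linarith)

lemma half_mem_torusSubgroup_of_two_dvd_sum {γ : Fin N → ℝ}
    (heven : ∀ k : Fin N → ℤ, ∑ i, (k i : ℝ) * γ i = 0 → 2 ∣ ∑ i, k i) :
    (fun _ : Fin N => (((1 : ℝ) / 2 : ℝ) : AddCircle (1 : ℝ))) ∈ torusSubgroup γ := by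
  let π : (Fin N → ℝ) →+ (Fin N → AddCircle (1 : ℝ)) :=
    (QuotientAddGroup.mk' _).compLeft (Fin N)
  let C := (torusSubgroup γ).comap π
  have hC : IsClosed (C : Set (Fin N → ℝ)) :=
    (orbitHom γ).range.isClosed_topologicalClosure.preimage
      (continuous_pi fun i => (AddCircle.continuous_mk' 1).comp (continuous_apply i))
  have hsingle : ∀ i, Pi.single i (1 : ℝ) ∈ C := fun i => by
    have : π (Pi.single i 1) = 0 := by
      ext j
      by_cases h : j = i <;> simp [π, h]
    simp [C, this]
  have hline : ∀ t : ℝ, t • γ ∈ C := fun t => (orbitHom γ).range.le_topologicalClosure ⟨t, rfl⟩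
  have hspan : Submodule.span ℝ (C : Set (Fin N → ℝ)) = ⊤ := by
    rw [eq_top_iff, ← (Pi.basisFun ℝ (Fin N)).span_eq]
    exact Submodule.span_mono (range_subset_iff.2 fun i => by simpa using hsingle i)
  by_contra hhalf
  obtain ⟨f, hfC, hfhalf⟩ :=
    C.exists_linearMap_intValued_of_notMem hC hspan (p := fun _ => 1 / 2) hhalf
  choose k hk using fun i => hfC _ (hsingle i)
  have hf : ∀ x, f x = ∑ i, (k i : ℝ) * x i := fun x => by
    refine (LinearMap.pi_apply_eq_sum_univ f x).trans (Finset.sum_congr rfl fun i _ => ?_)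
    rw [hk i, smul_eq_mul, mul_comm]
    congr 2
    ext j
    simp [Pi.single_apply, eq_comm]
  have hfγ : f γ = 0 := eq_zero_of_forall_mul_mem_range_intCast fun t => by
    rw [← smul_eq_mul, ← map_smul]
    exact hfC _ (hline t)
  obtain ⟨m, hm⟩ := heven k (by rw [← hfγ, hf])
  refine hfhalf ⟨m, ?_⟩
  rw [hf, ← Finset.sum_mul, ← Int.cast_sum, hm]
  push_cast
  ring

theorem stmt4_general (N : ℕ) (γ : Fin N → ℝ) :
    (∀ k : Fin N → ℤ, ∑ i, (k i : ℝ) * γ i = 0 → 2 ∣ ∑ i, k i) ↔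
      (fun _ : Fin N => (((1 : ℝ) / 2 : ℝ) : AddCircle (1 : ℝ))) ∈ torusSubgroup γ :=
  ⟨half_mem_torusSubgroup_of_two_dvd_sum, fun hhalf _ hk =>
    two_dvd_sum_of_half_mem_torusSubgroup hhalf hk⟩

/-- The following are equivalent: (i) every integer relation `k₁γ₁ + … + k_Nγ_N = 0`
has `k₁ + … + k_N` even; (ii) `(1/2,…,1/2) ∈ A(γ)`. -/
theorem stmt4 (N : ℕ) (hN : 1 ≤ N) (γ : Fin N → ℝ) :
    (∀ k : Fin N → ℤ, ∑ i, (k i : ℝ) * γ i = 0 → 2 ∣ ∑ i, k i) ↔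
      (fun _ : Fin N => (((1 : ℝ) / 2 : ℝ) : AddCircle (1 : ℝ))) ∈ torusSubgroup γ :=
  stmt4_general N γ

end
end

section
/- Let N ≥ 1, let λ₁,…,λ_N be distinct positive real numbers, and let (M₁,…,M_N), (w₁,…,w_N) ∈ ℂ^N with M_j ≠ 0 for at least one j. Then the function φ : 𝕋^N → ℂ given by φ(θ₁,…,θ_N) = Σ_{j=1}^N M_j cos(2πθ_j + w_j) = Σ_{j=1}^N (M_j/2)(e^{iw_j} e^{2πiθ_j} + e^{−iw_j} e^{−2πiθ_j}) (which is well defined on 𝕋^N) is not constant on the subgroup A(λ₁,…,λ_N). -/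
/-!
Along the one-parameter subgroup `y ↦ yλ`, `φ` becomes the trigonometric polynomial
`Σ_j (M_j/2) (e^{iw_j} e^{2πiλ_j y} + e^{-iw_j} e^{-2πiλ_j y})`, whose frequencies `±2πλ_j` are
pairwise distinct and nonzero because the `λ_j` are distinct and positive. If `φ` were constant
`C` on `A(λ)`, subtracting `C` would give a vanishing linear combination of the distinct
characters `y ↦ e^{iay}` of `ℝ` (the constant being the character of frequency `0`), so by
Dedekind's independence of characters every coefficient `M_j e^{±iw_j}/2` would vanish.
-/

open Complex

noncomputable section

/-- The function `φ(θ) = Σ_j M_j cos(2πθ_j + w_j)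
= Σ_j (M_j/2)(e^{iw_j} e^{2πiθ_j} + e^{-iw_j} e^{-2πiθ_j})`, well defined on `𝕋^N`. -/
def phiTrig {N : ℕ} (M w : Fin N → ℂ) (θ : Fin N → AddCircle (1 : ℝ)) : ℂ :=
  ∑ j, (M j / 2) * (Complex.exp (I * w j) * ((θ j).toCircle : ℂ) +
    Complex.exp (-I * w j) * ((θ j).toCircle : ℂ)⁻¹)

open scoped Real

def expChar (a : ℝ) : Multiplicative ℝ →* ℂ where
  toFun y := exp (a * y.toAdd * I)
  map_one' := by simp
  map_mul' x y := by simp [mul_add, add_mul, exp_add]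

@[simp]
lemma expChar_apply (a : ℝ) (y : Multiplicative ℝ) : expChar a y = exp (a * y.toAdd * I) := rfl

lemma expChar_injective : Function.Injective expChar := by
  intro a b hab
  by_contra hne
  have hsub : (a - b : ℂ) ≠ 0 := by exact_mod_cast sub_ne_zero.mpr hne
  -- at `y = π / (a - b)` the two characters differ by the factor `exp (π I) = -1`
  have hy := DFunLike.congr_fun hab (.ofAdd (π / (a - b)))
  have hshift : exp (a * (π / (a - b) : ℝ) * I) = -exp (b * (π / (a - b) : ℝ) * I) := by
    rw [← neg_one_mul, ← exp_pi_mul_I, ← exp_add]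
    congr 1
    push_cast
    field_simp
    ring
  simp only [expChar_apply, toAdd_ofAdd, hshift, neg_eq_self] at hy
  exact exp_ne_zero _ hy

lemma eq_zero_of_sum_exp_eq_zero {ι : Type*} [Fintype ι] {f : ι → ℝ} (hf : Function.Injective f)
    {c : ι → ℂ} (h : ∀ y : ℝ, ∑ i, c i * exp (f i * y * I) = 0) (i : ι) : c i = 0 :=
  Fintype.linearIndependent_iff.mp
    ((linearIndependent_monoidHom (Multiplicative ℝ) ℂ).comp _ (expChar_injective.comp hf)) c
    (funext fun y => by simpa using h y.toAdd) i

lemma eq_zero_of_sum_exp_eq_const {ι : Type*} [Fintype ι] {f : ι → ℝ} (hf : Function.Injective f)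
    (hf₀ : ∀ i, f i ≠ 0) {c : ι → ℂ} {C : ℂ} (h : ∀ y : ℝ, ∑ i, c i * exp (f i * y * I) = C)
    (i : ι) : c i = 0 := by
  -- the constant `C` is the term of frequency `0`
  have hf' : Function.Injective fun o : Option ι => o.elim 0 f := by
    rintro (_ | i) (_ | j) hij
    exacts [rfl, (hf₀ j hij.symm).elim, (hf₀ i hij).elim, congrArg some (hf hij)]
  refine eq_zero_of_sum_exp_eq_zero hf' (c := fun o => o.elim (-C) c) (fun y => ?_) (some i)
  simp [Fintype.sum_option, h y]

lemma coe_toCircle_ofReal (x : ℝ) :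
    (AddCircle.toCircle (x : AddCircle (1 : ℝ)) : ℂ) = exp (2 * π * x * I) := by
  simp [AddCircle.toCircle_apply_mk, Circle.coe_exp]

section Orbit

variable {N : ℕ}

lemma orbitHom_mem_torusSubgroup (γ : Fin N → ℝ) (y : ℝ) : orbitHom γ y ∈ torusSubgroup γ :=
  AddSubgroup.le_topologicalClosure _ ⟨y, rfl⟩

def orbitFreq (γ : Fin N → ℝ) : Fin N ⊕ Fin N → ℝ :=
  Sum.elim (fun j => 2 * π * γ j) (fun j => -(2 * π * γ j))

def orbitCoef (M w : Fin N → ℂ) : Fin N ⊕ Fin N → ℂ :=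
  Sum.elim (fun j => M j / 2 * exp (I * w j)) (fun j => M j / 2 * exp (-I * w j))

lemma orbitFreq_ne_zero {γ : Fin N → ℝ} (hγ : ∀ j, 0 < γ j) (k : Fin N ⊕ Fin N) :
    orbitFreq γ k ≠ 0 := by
  rcases k with j | j <;> simp [orbitFreq, Real.pi_ne_zero, (hγ j).ne']

lemma orbitFreq_injective {γ : Fin N → ℝ} (hγ : ∀ j, 0 < γ j) (hinj : Function.Injective γ) :
    Function.Injective (orbitFreq γ) := by
  refine Function.Injective.sumElim (fun i j h => hinj ?_) (fun i j h => hinj ?_) fun i j h => ?_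
  · simpa [Real.pi_ne_zero] using h
  · simpa [Real.pi_ne_zero] using h
  · nlinarith [hγ i, hγ j, Real.pi_pos]

lemma phiTrig_orbitHom (M w : Fin N → ℂ) (γ : Fin N → ℝ) (y : ℝ) :
    phiTrig M w (orbitHom γ y) = ∑ k, orbitCoef M w k * exp (orbitFreq γ k * y * I) := by
  rw [phiTrig, Fintype.sum_sum_type, ← Finset.sum_add_distrib]
  refine Finset.sum_congr rfl fun j _ => ?_
  simp only [orbitHom, AddMonoidHom.coe_mk, ZeroHom.coe_mk, coe_toCircle_ofReal, ← exp_neg,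
    orbitCoef, orbitFreq, Sum.elim_inl, Sum.elim_inr]
  push_cast
  ring_nf

end Orbit

theorem stmt5_general (N : ℕ) (lam : Fin N → ℝ)
    (hpos : ∀ j, 0 < lam j) (hinj : Function.Injective lam)
    (M w : Fin N → ℂ) (hM : ∃ j, M j ≠ 0) :
    ∃ x ∈ torusSubgroup lam, ∃ y ∈ torusSubgroup lam, phiTrig M w x ≠ phiTrig M w y := by
  obtain ⟨j, hj⟩ := hM
  by_contra! hconst
  have horbit (y : ℝ) : ∑ k, orbitCoef M w k * exp (orbitFreq lam k * y * I) =
      phiTrig M w (orbitHom lam 0) := by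
    rw [← phiTrig_orbitHom]
    exact hconst _ (orbitHom_mem_torusSubgroup lam y) _ (orbitHom_mem_torusSubgroup lam 0)
  have hcoef := eq_zero_of_sum_exp_eq_const (orbitFreq_injective hpos hinj)
    (orbitFreq_ne_zero hpos) horbit (.inl j)
  exact mul_ne_zero (div_ne_zero hj two_ne_zero) (exp_ne_zero _) hcoef

/-- For distinct positive `λ₁,…,λ_N` and coefficients `M_j` not all zero, the function
`φ(θ) = Σ_j M_j cos(2πθ_j + w_j)` is not constant on `A(λ₁,…,λ_N)`. -/
theorem stmt5 (N : ℕ) (hN : 1 ≤ N) (lam : Fin N → ℝ)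
    (hpos : ∀ j, 0 < lam j) (hinj : Function.Injective lam)
    (M w : Fin N → ℂ) (hM : ∃ j, M j ≠ 0) :
    ∃ x ∈ torusSubgroup lam, ∃ y ∈ torusSubgroup lam, phiTrig M w x ≠ phiTrig M w y :=
  stmt5_general N lam hpos hinj M w hM

end
end
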